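/- arXiv:math/0208033 — 10 statements merged into one kernel-verified Lean document; each statement's English description precedes it below -/
import Mathlib

section
/- Let $Z$ be an $m\times n$ integer matrix with $m\le n$ whose principal $m\times m$ block is skew-symmetrizable (i.e., $DZ[m;m]$ is skew-symmetric for some diagonal matrix $D$ with positive integer entries). If $\operatorname{rank} Z = m$, then for any mutation direction $i\in[1,m]$, the mutated matrix $\bar Z$ (defined by $\bar z_{kl}=-z_{kl}$ if $(k-i)(l-i)=0$ and $\bar z_{kl}=z_{kl}+(|z_{ki}|z_{il}+z_{ki}|z_{il}|)/2$ otherwise) also satisfies $\operatorname{rank}\bar Z = m$. -/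
lemma mut_key (a b : ℤ) :
    max (-a) 0 * b + a * max b 0 = (|a| * b + a * |b|) / 2 := by
  rcases le_total 0 a with ha | ha <;> rcases le_total 0 b with hb | hb
  · rw [abs_of_nonneg ha, abs_of_nonneg hb,
      max_eq_right (neg_nonpos.mpr ha), max_eq_left hb]
    have h : a * b + a * b = 2 * (a * b) := by ring
    rw [h, Int.mul_ediv_cancel_left _ two_ne_zero]; ring
  · rw [abs_of_nonneg ha, abs_of_nonpos hb,
      max_eq_right (neg_nonpos.mpr ha), max_eq_right hb]
    have h : a * b + a * -b = 2 * 0 := by ring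
    rw [h, Int.mul_ediv_cancel_left _ two_ne_zero]; ring
  · rw [abs_of_nonpos ha, abs_of_nonneg hb,
      max_eq_left (neg_nonneg.mpr ha), max_eq_left hb]
    have h : -a * b + a * b = 2 * 0 := by ring
    rw [h, Int.mul_ediv_cancel_left _ two_ne_zero]; ring
  · rw [abs_of_nonpos ha, abs_of_nonpos hb,
      max_eq_left (neg_nonneg.mpr ha), max_eq_right hb]
    have h : -a * b + a * -b = 2 * (-(a * b)) := by ring
    rw [h, Int.mul_ediv_cancel_left _ two_ne_zero]; ring

/-- Matrix mutation preserves the full-rank property of the exchange matrix. -/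
theorem stmt1 (m n : ℕ) (hmn : m ≤ n) (Z : Matrix (Fin m) (Fin n) ℤ)
    (emb : Fin m → Fin n) (hemb : ∀ k : Fin m, ((emb k : ℕ)) = (k : ℕ))
    (d : Fin m → ℤ) (hd : ∀ k, 0 < d k)
    (hskew : ∀ k l : Fin m, d k * Z k (emb l) = - (d l * Z l (emb k)))
    (i : Fin m)
    (Zbar : Matrix (Fin m) (Fin n) ℤ)
    (hZbar : ∀ k : Fin m, ∀ l : Fin n,
      Zbar k l = if k = i ∨ l = emb i then - Z k l
        else Z k l + (|Z k (emb i)| * Z i l + Z k (emb i) * |Z i l|) / 2)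
    (hrank : (Z.map ((↑) : ℤ → ℚ)).rank = m) :
    (Zbar.map ((↑) : ℤ → ℚ)).rank = m := by
  have hcast : ((↑) : ℤ → ℚ) = ⇑(Int.castRingHom ℚ) := rfl
  rw [hcast] at hrank ⊢
  -- Z i (emb i) = 0
  have hz0 : Z i (emb i) = 0 := by
    have h := hskew i i
    have hdi := (hd i).ne'
    have : d i * Z i (emb i) = 0 := by linarith
    exact (mul_eq_zero.mp this).resolve_left hdi
  -- define the row operation matrix E and column operation matrix F
  set u : Fin m → ℤ := fun k => if k = i then -2 else max (-(Z k (emb i))) 0 with hu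
  set w : Fin n → ℤ := fun l => if l = emb i then -2 else max (Z i l) 0 with hw
  set M : Matrix (Fin m) (Fin m) ℤ := Matrix.of (fun k j => if j = i then u k else 0) with hM
  set N : Matrix (Fin n) (Fin n) ℤ := Matrix.of (fun s t => if s = emb i then w t else 0) with hN
  set E : Matrix (Fin m) (Fin m) ℤ := 1 + M with hE
  set F : Matrix (Fin n) (Fin n) ℤ := 1 + N with hF
  have hui : u i = -2 := by simp [hu]
  have hwi : w (emb i) = -2 := by simp [hw]
  have hMZ : ∀ k l, (M * Z) k l = u k * Z i l := by
    intro k l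
    simp [hM, Matrix.mul_apply, ite_mul, Finset.sum_ite_eq]
  have hZN : ∀ (W : Matrix (Fin m) (Fin n) ℤ) k l, (W * N) k l = W k (emb i) * w l := by
    intro W k l
    simp [hN, Matrix.mul_apply, mul_ite, Finset.sum_ite_eq']
  -- Zbar = E * Z * F
  have hfact : Zbar = E * Z * F := by
    ext k l
    have hEZ : ∀ k' l', (E * Z) k' l' = Z k' l' + u k' * Z i l' := by
      intro k' l'
      rw [hE, Matrix.add_mul, Matrix.one_mul, Matrix.add_apply, hMZ]
    have h1 : (E * Z * F) k l = (E * Z) k l + (E * Z) k (emb i) * w l := by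
      rw [hF, Matrix.mul_add, Matrix.mul_one, Matrix.add_apply, hZN]
    rw [h1, hEZ, hEZ, hz0, mul_zero, add_zero, hZbar]
    by_cases hk : k = i <;> by_cases hl : l = emb i
    · rw [if_pos (Or.inl hk), hk, hl, hz0, hui, hwi]; ring
    · rw [if_pos (Or.inl hk), hk, hz0]
      have hwl : w l = max (Z i l) 0 := by rw [hw]; exact if_neg hl
      rw [hui, hwl]; ring
    · rw [if_pos (Or.inr hl), hl, hz0, hwi]
      have hul : u k = max (-(Z k (emb i))) 0 := by rw [hu]; exact if_neg hk
      rw [hul]; ring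
    · rw [if_neg (by tauto)]
      have hwl : w l = max (Z i l) 0 := by rw [hw]; exact if_neg hl
      have hul : u k = max (-(Z k (emb i))) 0 := by rw [hu]; exact if_neg hk
      rw [hul, hwl, ← mut_key]; ring
  -- E and F are involutions, hence invertible
  have hMM : M * M = -(M + M) := by
    ext k l
    rw [Matrix.mul_apply]
    have hterm : ∀ j, M k j * M j l = if j = i then u k * M i l else 0 := by
      intro j; by_cases hj : j = i <;> simp [hM, hj]
    rw [Finset.sum_congr rfl (fun j _ => hterm j), Finset.sum_ite_eq' Finset.univ i]
    by_cases hl : l = i <;> simp [hM, hl, hui] <;> ring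
  have hNN : N * N = -(N + N) := by
    ext s t
    rw [Matrix.mul_apply]
    have hterm : ∀ j, N s j * N j t = if j = emb i then N s (emb i) * w t else 0 := by
      intro j; by_cases hj : j = emb i <;> simp [hN, hj]
    rw [Finset.sum_congr rfl (fun j _ => hterm j), Finset.sum_ite_eq' Finset.univ (emb i)]
    by_cases hs : s = emb i <;> simp [hN, hs, hwi] <;> ring
  have hEE : E * E = 1 := by
    rw [hE, add_mul, mul_add, mul_add, one_mul, one_mul, mul_one, hMM]
    abel
  have hFF : F * F = 1 := by
    rw [hF, add_mul, mul_add, mul_add, one_mul, one_mul, mul_one, hNN]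
    abel
  -- pass to ℚ
  have hmap : Zbar.map ⇑(Int.castRingHom ℚ)
      = (E.map ⇑(Int.castRingHom ℚ)) * (Z.map ⇑(Int.castRingHom ℚ))
        * (F.map ⇑(Int.castRingHom ℚ)) := by
    rw [hfact, Matrix.map_mul, Matrix.map_mul]
  have hone : ∀ (p : ℕ) (A : Matrix (Fin p) (Fin p) ℤ), A * A = 1 →
      IsUnit (A.map ⇑(Int.castRingHom ℚ)).det := by
    intro p A hA
    have h1 : (A.map ⇑(Int.castRingHom ℚ)) * (A.map ⇑(Int.castRingHom ℚ)) = 1 := by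
      rw [← Matrix.map_mul, hA, Matrix.map_one _ (map_zero _) (map_one _)]
    have h2 : (A.map ⇑(Int.castRingHom ℚ)).det * (A.map ⇑(Int.castRingHom ℚ)).det = 1 := by
      rw [← Matrix.det_mul, h1, Matrix.det_one]
    exact IsUnit.of_mul_eq_one _ h2
  rw [hmap, Matrix.rank_mul_eq_left_of_isUnit_det _ _ (hone n F hFF),
    Matrix.rank_mul_eq_right_of_isUnit_det _ _ (hone m E hEE), hrank]
end

section
/- Suppose a matrix mutation in direction $i$ sends the integer weight vector $w=(w_1,\dots,w_n)$ to $\bar w$ defined by $\bar w_j=w_j$ for $j\ne i$ and $\bar w_i=\sum_{k: z_{ik}>0} z_{ik}w_k - w_i$. If $Zw^T=0$, then $\bar Z\bar w^T=0$, where $\bar Z$ is the mutation of $Z$ in direction $i$. -/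
/-!
Off the pivot row `i`, the mutated row `k` is `Z_k + c Z_i⁺ + c⁻ Z_i - 2c e_i` with `c = z_{ki}`,
so against `w` it gives `c (Z_i⁺ ⬝ w) - 2c w_i`; the new weight `w̄_i = Z_i⁺ ⬝ w - w_i` moves the
pivot coordinate by exactly the amount that cancels this. The pivot row is `-Z_i`, which does not
see the pivot coordinate since `z_{ii} = 0`.
-/

open Matrix

theorem Int.abs_mul_add_mul_abs_ediv_two (c a : ℤ) :
    (|c| * a + c * |a|) / 2 = c * a⁺ + c⁻ * a := by
  have h : |c| * a + c * |a| = 2 * (c * a⁺ + c⁻ * a) := by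
    linear_combination (-a) * posPart_add_negPart c + (-c) * posPart_add_negPart a
      + (c⁻ - c⁺) * posPart_sub_negPart a + (a⁺ - a⁻) * posPart_sub_negPart c
  rw [h, Int.mul_ediv_cancel_left _ two_ne_zero]

theorem ite_pos_mul_eq_posPart_mul {α : Type*} [Ring α] [LinearOrder α] (a b : α) :
    (if 0 < a then a * b else 0) = a⁺ * b := by
  split_ifs with ha
  · rw [posPart_eq_self.mpr ha.le]
  · rw [posPart_eq_zero.mpr (not_lt.mp ha), zero_mul]

theorem Matrix.dotProduct_eq_add_of_eq_off {κ R : Type*} [Fintype κ] [DecidableEq κ] [CommRing R]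
    (v w w' : κ → R) (j : κ) (h : ∀ l, l ≠ j → w' l = w l) :
    v ⬝ᵥ w' = v ⬝ᵥ w + v j * (w' j - w j) := by
  have hw' : w' = w + Pi.single j (w' j - w j) := by
    ext l
    by_cases hl : l = j
    · subst hl; simp
    · simp [hl, h l hl]
  conv_lhs => rw [hw']
  rw [dotProduct_add, dotProduct_single]

section Mutation

variable {ι κ : Type*} [DecidableEq ι] [DecidableEq κ]
  (Z : Matrix ι κ ℤ) (i : ι) (iN : κ)

/-- Mutation of a rectangular matrix at the pivot `(i, iN)`; the column `iN` plays the role of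
the paper's column `i`. -/
def mutation : Matrix ι κ ℤ :=
  Matrix.of fun k l => if k = i ∨ l = iN then - Z k l
    else Z k l + (|Z k iN| * Z i l + Z k iN * |Z i l|) / 2

theorem mutation_apply_pivot_col (k : ι) : mutation Z i iN k iN = -Z k iN := by
  simp [mutation]

theorem mutation_pivot_row : mutation Z i iN i = -Z i := by
  ext l
  simp [mutation]

theorem mutation_row_of_ne (hzii : Z i iN = 0) {k : ι} (hk : k ≠ i) :
    mutation Z i iN k = Z k + Z k iN • (Z i)⁺ + (Z k iN)⁻ • Z i - Pi.single iN (2 * Z k iN) := by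
  ext l
  by_cases hl : l = iN
  · subst hl
    simp [mutation, hzii]
    ring
  · simp [mutation, hk, hl, Int.abs_mul_add_mul_abs_ediv_two, add_assoc]

end Mutation

theorem stmt3_general (m n : ℕ) (Z : Matrix (Fin m) (Fin n) ℤ)
    (i : Fin m) (iN : Fin n)
    (hzii : Z i iN = 0)
    (Zbar : Matrix (Fin m) (Fin n) ℤ)
    (hZbar : ∀ k : Fin m, ∀ l : Fin n,
      Zbar k l = if k = i ∨ l = iN then - Z k l
        else Z k l + (|Z k iN| * Z i l + Z k iN * |Z i l|) / 2)
    (w wbar : Fin n → ℤ)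
    (hw : Z.mulVec w = 0)
    (hwbar1 : ∀ j : Fin n, j ≠ iN → wbar j = w j)
    (hwbar2 : wbar iN = (∑ k : Fin n, if 0 < Z i k then Z i k * w k else 0) - w iN) :
    Zbar.mulVec wbar = 0 := by
  obtain rfl : Zbar = mutation Z i iN := Matrix.ext hZbar
  have hrow (k : Fin m) : Z k ⬝ᵥ w = 0 := congrFun hw k
  have hshift : wbar iN - w iN = (Z i)⁺ ⬝ᵥ w - 2 * w iN := by
    simp only [hwbar2, ite_pos_mul_eq_posPart_mul, dotProduct, Pi.posPart_apply]
    ring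
  funext k
  change mutation Z i iN k ⬝ᵥ wbar = 0
  rw [dotProduct_eq_add_of_eq_off _ w wbar iN hwbar1, mutation_apply_pivot_col]
  by_cases hk : k = i
  · subst hk
    rw [mutation_pivot_row, neg_dotProduct, hrow, hzii]
    ring
  · rw [mutation_row_of_ne Z i iN hzii hk, hshift]
    simp only [add_dotProduct, sub_dotProduct, smul_dotProduct, single_dotProduct, hrow, smul_eq_mul]
    ring

/-- If `Z wᵀ = 0` then the mutated weight satisfies `Z̄ w̄ᵀ = 0`. -/
theorem stmt3 (m n : ℕ) (hmn : m ≤ n) (Z : Matrix (Fin m) (Fin n) ℤ)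
    (i : Fin m) (iN : Fin n) (hiN : (iN : ℕ) = (i : ℕ))
    (hzii : Z i iN = 0)
    (Zbar : Matrix (Fin m) (Fin n) ℤ)
    (hZbar : ∀ k : Fin m, ∀ l : Fin n,
      Zbar k l = if k = i ∨ l = iN then - Z k l
        else Z k l + (|Z k iN| * Z i l + Z k iN * |Z i l|) / 2)
    (w wbar : Fin n → ℤ)
    (hw : Z.mulVec w = 0)
    (hwbar1 : ∀ j : Fin n, j ≠ iN → wbar j = w j)
    (hwbar2 : wbar iN = (∑ k : Fin n, if 0 < Z i k then Z i k * w k else 0) - w iN) :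
    Zbar.mulVec wbar = 0 :=
  stmt3_general m n Z i iN hzii Zbar hZbar w wbar hw hwbar1 hwbar2
end

section
/- Let $P$ and $Q$ be rational functions with $\psi=P/Q$, where $P,Q$ are coprime polynomials. If $\psi(\xi)\psi(-\xi)=1$ identically, then $Q(\xi)=\pm P(-\xi)$; equivalently, $\psi(\xi)=\pm P(\xi)/P(-\xi)$ for a polynomial $P$ having no pair of symmetric roots (no roots $r,-r$ simultaneously). -/
/-!
Coprimality turns `P(ξ) P(-ξ) = Q(ξ) Q(-ξ)` into the two divisibilities `Q ∣ P(-ξ)` and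
`P ∣ Q(-ξ)`, i.e. `P(-ξ) ∣ Q`. Hence `Q = c P(-ξ)` for a constant unit `c`, and substituting back
into the identity gives `c² = 1`. A common root `r` of `P` and `P(-ξ)` would then be a common root
of `P` and `Q`, which coprimality forbids.
-/

open Polynomial

namespace Polynomial

variable {R : Type*} [CommRing R]

theorem eval_ne_zero_of_isCoprime [Nontrivial R] {P Q : R[X]} (hcop : IsCoprime P Q) {r : R}
    (hr : P.eval r = 0) : Q.eval r ≠ 0 := by
  have := hcop.map (evalRingHom r)
  rw [coe_evalRingHom, hr, isCoprime_zero_left] at this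
  exact this.ne_zero

section IsDomain

variable [IsDomain R] {P Q : R[X]}

theorem associated_comp_neg_X_of_mul_comp_neg_X_eq (hcop : IsCoprime P Q)
    (hid : P * P.comp (-X) = Q * Q.comp (-X)) : Associated (P.comp (-X)) Q :=
  associated_of_dvd_dvd
    ((dvd_comp_neg_X_iff P Q).mp (hcop.dvd_of_dvd_mul_left ⟨P.comp (-X), hid.symm⟩))
    (hcop.symm.dvd_of_dvd_mul_left ⟨Q.comp (-X), hid⟩)

theorem eq_comp_neg_X_or_eq_neg_comp_neg_X (hQ : Q ≠ 0) (hcop : IsCoprime P Q)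
    (hid : P * P.comp (-X) = Q * Q.comp (-X)) : Q = P.comp (-X) ∨ Q = -P.comp (-X) := by
  obtain ⟨u, hu⟩ := associated_comp_neg_X_of_mul_comp_neg_X_eq hcop hid
  obtain ⟨c, -, hc⟩ := Polynomial.isUnit_iff.mp u.isUnit
  rw [← hc] at hu
  have hQ' : Q.comp (-X) = P * C c := by
    rw [← hu, mul_comp_neg_X, comp_neg_X_comp_neg_X, C_comp]
  have hc2 : c * c = 1 := by
    have hQQ : Q * Q.comp (-X) ≠ 0 := mul_ne_zero hQ (comp_neg_X_eq_zero_iff.not.mpr hQ)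
    have h : C (c * c) * (Q * Q.comp (-X)) = 1 * (Q * Q.comp (-X)) :=
      calc C (c * c) * (Q * Q.comp (-X)) = C (c * c) * (P * P.comp (-X)) := by rw [hid]
        _ = Q * Q.comp (-X) := by rw [hQ', ← hu, C_mul]; ring
        _ = 1 * (Q * Q.comp (-X)) := (one_mul _).symm
    exact C_injective (by rw [C_1]; exact mul_right_cancel₀ hQQ h)
  rcases mul_self_eq_one_iff.mp hc2 with rfl | rfl
  · left; rw [← hu, C_1, mul_one]
  · right; rw [← hu, C_neg, C_1, mul_neg_one]

end IsDomain

end Polynomial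

theorem stmt5_general {F : Type*} [Field F]
    (P Q : Polynomial F) (hQ : Q ≠ 0) (hcop : IsCoprime P Q)
    (hid : P * P.comp (-Polynomial.X) = Q * Q.comp (-Polynomial.X)) :
    (Q = P.comp (-Polynomial.X) ∨ Q = -(P.comp (-Polynomial.X))) ∧
      (∀ r : F, P.eval r = 0 → P.eval (-r) ≠ 0) := by
  have hQP := eq_comp_neg_X_or_eq_neg_comp_neg_X hQ hcop hid
  refine ⟨hQP, fun r hr hr' => eval_ne_zero_of_isCoprime hcop hr ?_⟩
  rcases hQP with rfl | rfl <;> simp [eval_comp, hr']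

/-- If `ψ = P/Q` with `P, Q` coprime and `ψ(ξ)ψ(-ξ) = 1`, then `Q(ξ) = ±P(-ξ)`
and `P` has no pair of symmetric roots. -/
theorem stmt5 {F : Type*} [Field F] [CharZero F]
    (P Q : Polynomial F) (hQ : Q ≠ 0) (hcop : IsCoprime P Q)
    (hid : P * P.comp (-Polynomial.X) = Q * Q.comp (-Polynomial.X)) :
    (Q = P.comp (-Polynomial.X) ∨ Q = -(P.comp (-Polynomial.X))) ∧
      (∀ r : F, P.eval r = 0 → P.eval (-r) ≠ 0) :=
  stmt5_general P Q hQ hcop hid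
end

section
/- The birational map $T:(x,y)\mapsto\left(x\frac{b^2-bx+by+xy}{b^2-bx-by-xy},\; y\frac{b+x}{b-x}\right)$ with $b\ne 0$ has infinite order: its iterates satisfy $T^k(x,y)=\left(x+\frac{2k}{b}xy,\,y+\frac{2k}{b}xy\right)+o((x+y)^2)$ near the origin; in particular no power of $T$ is the identity. -/
/-!
Near the origin, `T` agrees to second order with the shear `(x, y) ↦ (x + c x y, y + c x y)` for
`c = 2 / b`. Modulo `o(‖p‖²)`, composing two maps tangent to the identity adds their quadratic
parts, so such shear jets compose additively in `c`, and `T^[k]` has the jet with `c = 2k / b`.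
For `k ≥ 1` this is nonzero, whereas the jet of the identity is the one with `c = 0`.
-/

open Asymptotics Filter Topology

section NormedField

variable {𝕜 : Type*} [NormedField 𝕜]

def shear (c : 𝕜) (p : 𝕜 × 𝕜) : 𝕜 × 𝕜 := (p.1 + c * p.1 * p.2, p.2 + c * p.1 * p.2)

def HasShearJet (c : 𝕜) (F : 𝕜 × 𝕜 → 𝕜 × 𝕜) : Prop :=
  (fun p => F p - shear c p) =o[𝓝 0] fun p => ‖p‖ ^ 2

def mapT (b : 𝕜) (p : 𝕜 × 𝕜) : 𝕜 × 𝕜 :=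
  (p.1 * (b ^ 2 - b * p.1 + b * p.2 + p.1 * p.2) / (b ^ 2 - b * p.1 - b * p.2 - p.1 * p.2),
   p.2 * (b + p.1) / (b - p.1))

lemma isBigO_fst_mul_snd_norm_sq :
    (fun p : 𝕜 × 𝕜 => p.1 * p.2) =O[𝓝 0] fun p => ‖p‖ ^ 2 := by
  simpa [pow_two] using (isBigO_fst_prod' (f' := id)).norm_right.mul isBigO_snd_prod'.norm_right

lemma hasShearJet_id : HasShearJet (0 : 𝕜) id := by
  simp [HasShearJet, shear]

namespace HasShearJet

variable {a c : 𝕜} {F G : 𝕜 × 𝕜 → 𝕜 × 𝕜}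

lemma sub_self_isBigO (hF : HasShearJet a F) :
    (fun p => F p - p) =O[𝓝 0] fun p => ‖p‖ ^ 2 := by
  have hshear : (fun p => shear a p - p) =O[𝓝 0] fun p => ‖p‖ ^ 2 := by
    have h := isBigO_fst_mul_snd_norm_sq.const_mul_left a
    simpa [shear, mul_assoc] using h.prod_left h
  simpa using hF.isBigO.add hshear

lemma isBigO_norm (hF : HasShearJet a F) : F =O[𝓝 0] fun p => ‖p‖ := by
  simpa using (hF.sub_self_isBigO.trans_isLittleO (isLittleO_norm_pow_id one_lt_two)).isBigO.add
    (isBigO_refl (fun p : 𝕜 × 𝕜 => p) _) |>.norm_right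

lemma tendsto (hF : HasShearJet a F) : Tendsto F (𝓝 0) (𝓝 0) :=
  hF.isBigO_norm.trans_tendsto tendsto_norm_zero

lemma fst_mul_snd_sub_isLittleO (hF : HasShearJet a F) :
    (fun p => (F p).1 * (F p).2 - p.1 * p.2) =o[𝓝 0] fun p => ‖p‖ ^ 2 := by
  have h1 := isBigO_fst_prod'.trans hF.sub_self_isBigO
  have h2 := isBigO_snd_prod'.trans hF.sub_self_isBigO
  have hF2 : (fun p => (F p).2) =o[𝓝 0] fun _ => (1 : ℝ) :=
    (isLittleO_one_iff ℝ).2 ((continuous_snd.tendsto 0).comp hF.tendsto)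
  have hp1 : (fun p : 𝕜 × 𝕜 => p.1) =o[𝓝 0] fun _ => (1 : ℝ) :=
    (isLittleO_one_iff ℝ).2 (continuous_fst.tendsto 0)
  have h12 := h1.mul_isLittleO hF2
  have h21 := hp1.mul_isBigO h2
  simp only [mul_one, one_mul] at h12 h21
  refine (h12.add h21).congr_left fun p => ?_
  simp only [Prod.fst_sub, Prod.snd_sub]
  ring

lemma comp (hG : HasShearJet c G) (hF : HasShearJet a F) : HasShearJet (a + c) (G ∘ F) := by
  have hGF : (fun p => G (F p) - shear c (F p)) =o[𝓝 0] fun p => ‖p‖ ^ 2 :=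
    (hG.comp_tendsto hF.tendsto).trans_isBigO (hF.isBigO_norm.norm_left.pow 2)
  have hd := hF.fst_mul_snd_sub_isLittleO.const_mul_left c
  refine (hGF.add (hF.add (hd.prod_left hd))).congr_left fun p => ?_
  ext <;> simp [shear] <;> ring

lemma iterate (hF : HasShearJet c F) (k : ℕ) : HasShearJet (k * c) F^[k] := by
  induction k with
  | zero => simpa using hasShearJet_id
  | succ k ih =>
    rw [Function.iterate_succ']
    convert hF.comp ih using 1
    push_cast
    ring

end HasShearJet

lemma hasShearJet_mapT {b : 𝕜} (hb : b ≠ 0) : HasShearJet (2 / b) (mapT b) := by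
  -- `mapT b p - shear (2 / b) p = (p.1 * p.2) • E p`
  set E : 𝕜 × 𝕜 → 𝕜 × 𝕜 := fun p =>
    (2 * (2 * b * p.1 + b * p.2 + p.1 * p.2) / (b * (b ^ 2 - b * p.1 - b * p.2 - p.1 * p.2)),
     2 * p.1 / (b * (b - p.1)))
  have hE : E =o[𝓝 0] fun _ => (1 : ℝ) := by
    refine (isLittleO_one_iff ℝ).2 ?_
    have hcont : ContinuousAt E 0 := by
      fun_prop (disch := simp [hb])
    have h0 : E 0 = 0 := by simp [E]
    simpa only [h0] using hcont.tendsto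
  have hD : Tendsto (fun p : 𝕜 × 𝕜 => b ^ 2 - b * p.1 - b * p.2 - p.1 * p.2) (𝓝 0)
      (𝓝 (b ^ 2)) := by
    simpa using (by fun_prop : Continuous fun p : 𝕜 × 𝕜 =>
      b ^ 2 - b * p.1 - b * p.2 - p.1 * p.2).tendsto 0
  refine (isBigO_fst_mul_snd_norm_sq.smul_isLittleO hE).congr' ?_ (by simp)
  filter_upwards [(continuous_fst.tendsto (0 : 𝕜 × 𝕜)).eventually_ne hb.symm,
    hD.eventually_ne (pow_ne_zero 2 hb)] with p hb1 hDp
  ext <;> simp only [E, mapT, shear, Prod.fst_sub, Prod.snd_sub, Prod.smul_fst, Prod.smul_snd,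
    smul_eq_mul]
  · have hDp' : b * (b - p.1 - p.2) - p.1 * p.2 ≠ 0 := by convert hDp using 1; ring
    field_simp
    ring
  · field_simp
    ring

end NormedField

lemma HasShearJet.eq_zero_of_eq_id {𝕜 : Type*} [NontriviallyNormedField 𝕜] {c : 𝕜}
    (h : HasShearJet c (id : 𝕜 × 𝕜 → 𝕜 × 𝕜)) : c = 0 := by
  by_contra hc
  have hdiag : Tendsto (fun t : 𝕜 => (t, t)) (𝓝[≠] 0) (𝓝 0) :=
    ((by fun_prop : Continuous fun t : 𝕜 => (t, t)).tendsto' 0 0 rfl).mono_left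
      nhdsWithin_le_nhds
  -- along the diagonal the first coordinate of `p - shear c p` is `-c t²`
  have h1 := (isBigO_fst_prod'.trans_isLittleO (h.comp_tendsto hdiag)).trans_isBigO
    (isBigO_of_le (g := fun t : 𝕜 => t ^ 2) _ fun t => by simp [Prod.norm_mk])
  have h2 : (fun t : 𝕜 => t ^ 2) =o[𝓝[≠] 0] fun t => t ^ 2 := by
    refine (isLittleO_const_mul_left_iff (neg_ne_zero.2 hc)).1 (h1.congr_left fun t => ?_)
    simp [shear]
    ring
  have hne : ∀ᶠ t in 𝓝[≠] (0 : 𝕜), t ^ 2 ≠ 0 :=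
    eventually_mem_nhdsWithin.mono fun t ht => pow_ne_zero 2 ht
  exact isLittleO_irrefl hne.frequently h2

/-- The map `T(x,y) = (x(b²-bx+by+xy)/(b²-bx-by-xy), y(b+x)/(b-x))` has iterates
`T^k(x,y) = (x + (2k/b)xy, y + (2k/b)xy) + o(‖(x,y)‖²)` near the origin, and
in particular no power of `T` is the identity. -/
theorem stmt8 (b : ℝ) (hb : b ≠ 0) (T : ℝ × ℝ → ℝ × ℝ)
    (hT : ∀ p : ℝ × ℝ, T p =
      (p.1 * (b ^ 2 - b * p.1 + b * p.2 + p.1 * p.2) /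
          (b ^ 2 - b * p.1 - b * p.2 - p.1 * p.2),
       p.2 * (b + p.1) / (b - p.1))) :
    (∀ k : ℕ, Asymptotics.IsLittleO (nhds ((0, 0) : ℝ × ℝ))
        (fun p : ℝ × ℝ => T^[k] p -
          (p.1 + (2 * k / b) * p.1 * p.2, p.2 + (2 * k / b) * p.1 * p.2))
        (fun p : ℝ × ℝ => ‖p‖ ^ 2)) ∧
    (∀ k : ℕ, 1 ≤ k → ∃ p : ℝ × ℝ, T^[k] p ≠ p) := by
  obtain rfl : T = mapT b := funext hT
  have hiter (k : ℕ) : HasShearJet (2 * k / b) (mapT b)^[k] := by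
    convert (hasShearJet_mapT hb).iterate k using 1
    ring
  refine ⟨hiter, fun k hk => ?_⟩
  by_contra! hfix
  have hid : (mapT b)^[k] = id := funext hfix
  have hzero := (hid ▸ hiter k).eq_zero_of_eq_id
  have hk0 : (k : ℝ) ≠ 0 := by positivity
  exact div_ne_zero (mul_ne_zero two_ne_zero hk0) hb hzero
end

section
/- Laplace-expansion identity: for an $n\times n$ matrix $X$, ordered index sets $I=\{i_1,\dots,i_r\}$, $J=\{j_1,\dots,j_r\}$, and indices $\alpha,\beta$, one has $\sum_{p=1}^r x_{i_p\beta}\,X_{I(i_p\to\alpha)}^{J}=x_{\alpha\beta}X_I^J - X_{(\alpha I)}^{(\beta J)}$, where $X_I^J=\det(x_{i_p j_q})_{p,q=1}^r$, $I(i_p\to\alpha)$ replaces $i_p$ by $\alpha$ in $I$, and $(\alpha I)$, $(\beta J)$ prepend $\alpha$ to $I$ and $\beta$ to $J$. -/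
/-!
Expand the bordered determinant `X_{(αI)}^{(βJ)}` along its first column. The entry `x_{αβ}`
contributes `x_{αβ} X_I^J`. Deleting the row `i_p` leaves the rows `α, i_1, …, î_p, …, i_r`,
which the cycle `Fin.cycleRange p` rearranges into `I(i_p → α)`; its sign `(-1)^p` combines
with the cofactor sign `(-1)^(p+1)` to `-1`, giving `-∑ₚ x_{i_pβ} X_{I(i_p→α)}^J`.
-/

namespace Matrix

variable {R : Type*} [CommRing R] {r : ℕ}

theorem det_submatrix_succ_succAbove (M : Matrix (Fin (r + 1)) (Fin r) R) (p : Fin r) :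
    det (M.submatrix p.succ.succAbove id)
      = (-1) ^ (p : ℕ) * det ((M.submatrix Fin.succ id).updateRow p (M 0)) := by
  have hcycle : (M.submatrix p.succ.succAbove id).submatrix (Fin.cycleRange p) id
      = (M.submatrix Fin.succ id).updateRow p (M 0) := by
    ext i j
    simp only [submatrix_apply, id, Fin.succAbove_cycleRange, updateRow_apply]
    rcases eq_or_ne i p with rfl | hne
    · simp
    · rw [Equiv.swap_apply_of_ne_of_ne (Fin.succ_ne_zero i) (Fin.succ_injective _ |>.ne hne),
        if_neg hne]
  rw [← hcycle, det_permute, Fin.sign_cycleRange, ← mul_assoc]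
  push_cast
  rw [← mul_pow, neg_one_mul, neg_neg, one_pow, one_mul]

theorem det_succ_eq_sub_sum_det_updateRow (N : Matrix (Fin (r + 1)) (Fin (r + 1)) R) :
    det N = N 0 0 * det (N.submatrix Fin.succ Fin.succ)
      - ∑ p : Fin r, N p.succ 0 *
          det ((N.submatrix Fin.succ Fin.succ).updateRow p fun q => N 0 q.succ) := by
  rw [det_succ_column_zero, Fin.sum_univ_succ, sub_eq_add_neg, ← Finset.sum_neg_distrib]
  congr 1
  · simp
  refine Finset.sum_congr rfl fun p _ => ?_
  have hsq : ((-1 : R) ^ (p : ℕ)) ^ 2 = 1 := by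
    rw [← pow_mul, mul_comm, pow_mul, neg_one_sq, one_pow]
  rw [show N.submatrix p.succ.succAbove Fin.succ
      = (N.submatrix id Fin.succ).submatrix p.succ.succAbove id from rfl,
    det_submatrix_succ_succAbove, submatrix_submatrix, Function.id_comp, Function.comp_id,
    Fin.val_succ, pow_succ]
  change _ * ((-1) ^ (p : ℕ) * det (updateRow _ p fun q => N 0 q.succ)) = _
  linear_combination (-N p.succ 0 * det ((N.submatrix Fin.succ Fin.succ).updateRow p
    fun q => N 0 q.succ)) * hsq

theorem of_apply_update_eq_updateRow {m n T : Type*} [DecidableEq m]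
    (X : Matrix m n T) (I : Fin r → m) (J : Fin r → n) (p : Fin r) (a : m) :
    (of fun i j => X (Function.update I p a i) (J j))
      = (of fun i j => X (I i) (J j)).updateRow p fun j => X a (J j) := by
  ext i j
  rcases eq_or_ne i p with rfl | hne <;> simp [*]

end Matrix

open Matrix

/-- Laplace-expansion identity
`∑ₚ x_{iₚβ} X_{I(iₚ→α)}^J = x_{αβ} X_I^J − X_{(αI)}^{(βJ)}`. -/
theorem stmt10 {R : Type*} [CommRing R] {n r : ℕ} (X : Matrix (Fin n) (Fin n) R)
    (I J : Fin r → Fin n) (α β : Fin n) :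
    (∑ p : Fin r, X (I p) β *
        Matrix.det (Matrix.of fun p' q : Fin r => X (Function.update I p α p') (J q)))
      = X α β * Matrix.det (Matrix.of fun p q : Fin r => X (I p) (J q))
        - Matrix.det (Matrix.of fun p q : Fin (r + 1) =>
            X ((Fin.cons α I : Fin (r + 1) → Fin n) p)
              ((Fin.cons β J : Fin (r + 1) → Fin n) q)) := by
  rw [det_succ_eq_sub_sum_det_updateRow]
  simp only [of_apply, submatrix, Fin.cons_zero, Fin.cons_succ]
  rw [sub_sub_cancel]
  exact Finset.sum_congr rfl fun p _ => by rw [of_apply_update_eq_updateRow]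
end

section
/- Jacobi's determinantal identity: for a matrix $A$ over a commutative ring, row multi-index $I$, column multi-index $J$ of equal size, and additional row indices $\alpha,\beta\notin I$ and column indices $\gamma,\delta\notin J$, one has $A_{(\alpha\beta I)}^{(\gamma\delta J)}\,A_I^J = A_{(\alpha I)}^{(\gamma J)}A_{(\beta I)}^{(\delta J)} - A_{(\alpha I)}^{(\delta J)}A_{(\beta I)}^{(\gamma J)}$, where $A_K^L$ denotes the minor of $A$ with ordered row set $K$ and ordered column set $L$, and $(\alpha I)$ denotes prepending $\alpha$ to $I$. -/
/-!
For a square matrix `M` with rows and columns split as `o ⊕ m`, replacing the `o`-columns of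
the identity by those of `adj M` gives a matrix `B` with `det B = det (adj M)₁₁`, and `M * B` is
block triangular with diagonal blocks `det M • 1` and `M₂₂`. Hence
`det M * det (adj M)₁₁ = (det M) ^ |o| * det M₂₂`, and `det M` cancels for the generic matrix over
`ℤ[X_ij]`, a domain, whence for every matrix over every commutative ring. For `|o| = 2` the
entries of `(adj M)₁₁` are the four signed minors of the Desnanot–Jacobi identity.
-/

namespace Fin

theorem cons_cons_comp_one_succAbove {α : Type*} {r : ℕ} (x y : α) (f : Fin r → α) :
    (Fin.cons x (Fin.cons y f) : Fin (r + 2) → α) ∘ (1 : Fin (r + 2)).succAbove = Fin.cons x f := by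
  ext p
  cases p using Fin.cases <;> simp

end Fin

namespace Matrix

variable {R : Type*} [CommRing R]

section Blocks

variable {o m : Type*} [Fintype o] [Fintype m] [DecidableEq o] [DecidableEq m]

theorem det_mul_det_adjugate_toBlocks₁₁ (M : Matrix (o ⊕ m) (o ⊕ m) R) :
    M.det * M.adjugate.toBlocks₁₁.det = M.det ^ Fintype.card o * M.toBlocks₂₂.det := by
  set N := M.adjugate
  have hMN : fromBlocks M.toBlocks₁₁ M.toBlocks₁₂ M.toBlocks₂₁ M.toBlocks₂₂ *
      fromBlocks N.toBlocks₁₁ N.toBlocks₁₂ N.toBlocks₂₁ N.toBlocks₂₂ =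
      fromBlocks (M.det • 1) 0 0 (M.det • 1) := by
    rw [fromBlocks_toBlocks, fromBlocks_toBlocks, M.mul_adjugate, ← fromBlocks_one,
      fromBlocks_smul, smul_zero, smul_zero]
  rw [fromBlocks_multiply, fromBlocks_inj] at hMN
  obtain ⟨h₁₁, -, h₂₁, -⟩ := hMN
  have hprod : M * fromBlocks N.toBlocks₁₁ 0 N.toBlocks₂₁ 1 =
      fromBlocks (M.det • 1) M.toBlocks₁₂ 0 M.toBlocks₂₂ := by
    conv_lhs => rw [← fromBlocks_toBlocks M]
    rw [fromBlocks_multiply, h₁₁, h₂₁]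
    simp
  have hdet := congrArg det hprod
  rwa [det_mul, det_fromBlocks_zero₁₂, det_fromBlocks_zero₂₁, det_smul, det_one, det_one,
    mul_one, mul_one] at hdet

theorem det_adjugate_toBlocks₁₁ [Nonempty o] (M : Matrix (o ⊕ m) (o ⊕ m) R) :
    M.adjugate.toBlocks₁₁.det = M.det ^ (Fintype.card o - 1) * M.toBlocks₂₂.det := by
  let X := mvPolynomialX (o ⊕ m) (o ⊕ m) ℤ
  have hX : X.adjugate.toBlocks₁₁.det = X.det ^ (Fintype.card o - 1) * X.toBlocks₂₂.det := by
    apply mul_left_cancel₀ (det_mvPolynomialX_ne_zero (o ⊕ m) ℤ)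
    rw [det_mul_det_adjugate_toBlocks₁₁, ← mul_assoc, ← pow_succ',
      Nat.sub_add_cancel Fintype.card_pos]
  let f : MvPolynomial ((o ⊕ m) × (o ⊕ m)) ℤ →+* R :=
    MvPolynomial.eval₂Hom (Int.castRingHom R) fun p => M p.1 p.2
  have hfX : f.mapMatrix X = M := mvPolynomialX_map_eval₂ _ M
  have hmap := congrArg f hX
  simp only [RingHom.map_det, map_mul, map_pow] at hmap
  convert hmap using 3 <;> rw [← hfX]
  · rw [← RingHom.map_adjugate]; rfl
  · rfl

end Blocks

theorem det_mul_det_submatrix_succ_succ {r : ℕ} (M : Matrix (Fin (r + 2)) (Fin (r + 2)) R) :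
    M.det * (M.submatrix (Fin.succ ∘ Fin.succ) (Fin.succ ∘ Fin.succ)).det =
      M.adjugate 0 0 * M.adjugate 1 1 - M.adjugate 0 1 * M.adjugate 1 0 := by
  let e : Fin 2 ⊕ Fin r ≃ Fin (r + 2) := finSumFinEquiv.trans (finCongr (add_comm 2 r))
  have he₀ : e (.inl 0) = 0 := rfl
  have he₁ : e (.inl 1) = 1 := rfl
  have he₂ : ∀ k, e (.inr k) = k.succ.succ := fun k => by
    ext; simp [e]
  have h := det_adjugate_toBlocks₁₁ (M.submatrix e e)
  rw [adjugate_submatrix_equiv_self, det_submatrix_equiv_self, det_fin_two] at h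
  simp only [toBlocks₁₁, toBlocks₂₂, submatrix_apply, of_apply, he₀, he₁, he₂, Fintype.card_fin,
    Nat.reduceSub, pow_one] at h
  exact h.symm

theorem det_submatrix_cons_cons_mul_det_submatrix {m n : Type*} (A : Matrix m n R) {r : ℕ}
    (I : Fin r → m) (J : Fin r → n) (a b : m) (c d : n) :
    (A.submatrix (Fin.cons a (Fin.cons b I)) (Fin.cons c (Fin.cons d J))).det *
        (A.submatrix I J).det =
      (A.submatrix (Fin.cons a I) (Fin.cons c J)).det *
          (A.submatrix (Fin.cons b I) (Fin.cons d J)).det -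
        (A.submatrix (Fin.cons a I) (Fin.cons d J)).det *
          (A.submatrix (Fin.cons b I) (Fin.cons c J)).det := by
  have h := det_mul_det_submatrix_succ_succ
    (A.submatrix (Fin.cons a (Fin.cons b I)) (Fin.cons c (Fin.cons d J)))
  simp only [adjugate_fin_succ_eq_det_submatrix, submatrix_submatrix, Fin.succAbove_zero,
    ← Function.comp_assoc, Fin.cons_comp_succ, Fin.cons_cons_comp_one_succAbove] at h
  rw [h]
  norm_num
  ring

end Matrix

theorem stmt11_general {R : Type*} [CommRing R] {n r : ℕ} (A : Matrix (Fin n) (Fin n) R)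
    (I J : Fin r → Fin n) (α β γ δ : Fin n) :
    Matrix.det (Matrix.of fun p q : Fin (r + 2) =>
        A ((Fin.cons α (Fin.cons β I) : Fin (r + 2) → Fin n) p)
          ((Fin.cons γ (Fin.cons δ J) : Fin (r + 2) → Fin n) q)) *
      Matrix.det (Matrix.of fun p q : Fin r => A (I p) (J q))
    = Matrix.det (Matrix.of fun p q : Fin (r + 1) =>
          A ((Fin.cons α I : Fin (r + 1) → Fin n) p) ((Fin.cons γ J : Fin (r + 1) → Fin n) q)) *
        Matrix.det (Matrix.of fun p q : Fin (r + 1) =>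
          A ((Fin.cons β I : Fin (r + 1) → Fin n) p) ((Fin.cons δ J : Fin (r + 1) → Fin n) q))
      - Matrix.det (Matrix.of fun p q : Fin (r + 1) =>
          A ((Fin.cons α I : Fin (r + 1) → Fin n) p) ((Fin.cons δ J : Fin (r + 1) → Fin n) q)) *
        Matrix.det (Matrix.of fun p q : Fin (r + 1) =>
          A ((Fin.cons β I : Fin (r + 1) → Fin n) p) ((Fin.cons γ J : Fin (r + 1) → Fin n) q)) :=
  Matrix.det_submatrix_cons_cons_mul_det_submatrix A I J α β γ δ

/-- Jacobi's determinantal (Desnanot–Jacobi) identity for minors: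
`A_{(αβI)}^{(γδJ)} A_I^J = A_{(αI)}^{(γJ)} A_{(βI)}^{(δJ)} − A_{(αI)}^{(δJ)} A_{(βI)}^{(γJ)}`. -/
theorem stmt11 {R : Type*} [CommRing R] {n r : ℕ} (A : Matrix (Fin n) (Fin n) R)
    (I J : Fin r → Fin n) (α β γ δ : Fin n)
    (hα : ∀ p, α ≠ I p) (hβ : ∀ p, β ≠ I p) (hαβ : α ≠ β)
    (hγ : ∀ q, γ ≠ J q) (hδ : ∀ q, δ ≠ J q) (hγδ : γ ≠ δ) :
    Matrix.det (Matrix.of fun p q : Fin (r + 2) =>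
        A ((Fin.cons α (Fin.cons β I) : Fin (r + 2) → Fin n) p)
          ((Fin.cons γ (Fin.cons δ J) : Fin (r + 2) → Fin n) q)) *
      Matrix.det (Matrix.of fun p q : Fin r => A (I p) (J q))
    = Matrix.det (Matrix.of fun p q : Fin (r + 1) =>
          A ((Fin.cons α I : Fin (r + 1) → Fin n) p) ((Fin.cons γ J : Fin (r + 1) → Fin n) q)) *
        Matrix.det (Matrix.of fun p q : Fin (r + 1) =>
          A ((Fin.cons β I : Fin (r + 1) → Fin n) p) ((Fin.cons δ J : Fin (r + 1) → Fin n) q))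
      - Matrix.det (Matrix.of fun p q : Fin (r + 1) =>
          A ((Fin.cons α I : Fin (r + 1) → Fin n) p) ((Fin.cons δ J : Fin (r + 1) → Fin n) q)) *
        Matrix.det (Matrix.of fun p q : Fin (r + 1) =>
          A ((Fin.cons β I : Fin (r + 1) → Fin n) p) ((Fin.cons γ J : Fin (r + 1) → Fin n) q)) :=
  stmt11_general A I J α β γ δ
end

section
/- Let $A_m$ be the $m\times m$ integer matrix with $(A_m)_{ij}=-1$ for $i<j$, $0$ for $i=j$, and $1$ for $i>j$. Then the characteristic values $\lambda$ of $A_m$ are exactly the solutions of $\left(\frac{\lambda+1}{\lambda-1}\right)^m=-1$; equivalently, $\det(\lambda I_m - A_m^T)$ is a nonzero constant multiple of $(\lambda-1)^m+(\lambda+1)^m$. In particular $\det(A_m - I_m)\ne 0$, i.e., $1$ is never an eigenvalue of $A_m$. -/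
open Matrix

namespace Stmt12Aux

variable {R : Type*} [CommRing R]

/-- The matrix with `x` on the diagonal, `1` above and `-1` below. -/
def Mmat (m : ℕ) (x : R) : Matrix (Fin m) (Fin m) R :=
  Matrix.of fun i j => if (i:ℕ) < (j:ℕ) then 1 else if (j:ℕ) < (i:ℕ) then -1 else x

/-- The row-reduced form of `Mmat`. -/
def Bmat (m : ℕ) (x : R) : Matrix (Fin m) (Fin m) R :=
  Matrix.of fun i j =>
    if (i:ℕ) + 1 = m then (if (j:ℕ) + 1 = m then x else -1)
    else if (j:ℕ) = (i:ℕ) then x + 1 else if (j:ℕ) = (i:ℕ) + 1 then 1 - x else 0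

/-- The elementary row-operation matrix. -/
def Emat (m : ℕ) : Matrix (Fin m) (Fin m) R :=
  Matrix.of fun i j =>
    (if (j:ℕ) = (i:ℕ) then 1 else 0) + (if (j:ℕ) = (i:ℕ) + 1 then -1 else 0)

lemma detE (m : ℕ) : (Emat m : Matrix (Fin m) (Fin m) R).det = 1 := by
  rw [Matrix.det_of_upperTriangular]
  · rw [Finset.prod_eq_one]
    intro i _
    simp [Emat]
  · intro i j hij
    simp only [Function.id_def, Fin.lt_def] at hij
    simp only [Emat, Matrix.of_apply]
    rw [if_neg (by omega), if_neg (by omega), add_zero]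

lemma EM (m : ℕ) (x : R) : Emat m * Mmat m x = Bmat m x := by
  ext i j
  have h1 : (Emat m * Mmat m x : Matrix (Fin m) (Fin m) R) i j
      = Mmat m x i j + ∑ k : Fin m, (if (k:ℕ) = (i:ℕ) + 1 then (-1:R) else 0) * Mmat m x k j := by
    simp only [Matrix.mul_apply, Emat, Matrix.of_apply, add_mul, Finset.sum_add_distrib]
    congr 1
    have : ∀ k : Fin m, ((k:ℕ) = (i:ℕ)) ↔ k = i := fun k => Fin.val_inj
    simp only [this, ite_mul, one_mul, zero_mul]
    rw [Finset.sum_ite_eq' Finset.univ i]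
    simp
  rw [h1]
  by_cases h : (i:ℕ) + 1 < m
  · have h2 : ∑ k : Fin m, (if (k:ℕ) = (i:ℕ) + 1 then (-1:R) else 0) * Mmat m x k j
        = -Mmat m x ⟨(i:ℕ)+1, h⟩ j := by
      have : ∀ k : Fin m, ((k:ℕ) = (i:ℕ) + 1) ↔ k = ⟨(i:ℕ)+1, h⟩ := by
        intro k; rw [← Fin.val_inj]
      simp only [this, ite_mul, neg_one_mul, zero_mul]
      rw [Finset.sum_ite_eq' Finset.univ]
      simp
    rw [h2]
    simp only [Mmat, Bmat, Matrix.of_apply]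
    split_ifs <;> first | ring1 | omega | (exfalso; omega)
  · have hi : (i:ℕ) + 1 = m := by omega
    have h2 : ∑ k : Fin m, (if (k:ℕ) = (i:ℕ) + 1 then (-1:R) else 0) * Mmat m x k j = 0 := by
      apply Finset.sum_eq_zero
      intro k _
      rw [if_neg (by omega), zero_mul]
    rw [h2, add_zero]
    simp only [Mmat, Bmat, Matrix.of_apply]
    split_ifs <;> first | ring1 | omega | (exfalso; omega)

lemma detB_one (x : R) : (Bmat 1 x).det = x := by
  rw [Matrix.det_fin_one]
  simp [Bmat]

lemma detB_succ (m : ℕ) (hm : 1 ≤ m) (x : R) :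
    (Bmat (m+1) x).det = (x + 1) * (Bmat m x).det - (x - 1) ^ m := by
  rw [Matrix.det_succ_column_zero]
  have hz : ∀ i ∈ (Finset.univ : Finset (Fin (m+1))), i ∉ ({0, Fin.last m} : Finset (Fin (m+1))) →
      (-1:R) ^ (i:ℕ) * Bmat (m+1) x i 0 *
        ((Bmat (m+1) x).submatrix i.succAbove Fin.succ).det = 0 := by
    intro i _ hi
    simp only [Finset.mem_insert, Finset.mem_singleton] at hi
    push_neg at hi
    have h0 : (i:ℕ) ≠ 0 := fun h => hi.1 (Fin.ext h)
    have hl : (i:ℕ) ≠ m := fun h => hi.2 (Fin.ext h)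
    have : Bmat (m+1) x i 0 = 0 := by
      simp only [Bmat, Matrix.of_apply, Fin.val_zero]
      have hv0 : ((0 : Fin (m+1)) : ℕ) = 0 := rfl
      split_ifs <;> first | rfl | (exfalso; omega)
    rw [this, mul_zero, zero_mul]
  rw [← Finset.sum_subset (Finset.subset_univ _) hz]
  have hne : (0 : Fin (m+1)) ≠ Fin.last m := by
    intro h
    have h' : (0:ℕ) = m := by simpa using congrArg Fin.val h
    omega
  rw [Finset.sum_pair hne]
  -- first minor
  have hm0 : (Bmat (m+1) x).submatrix (Fin.succAbove 0) Fin.succ = Bmat m x := by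
    ext i j
    simp only [Matrix.submatrix_apply, Fin.succAbove_zero, Bmat, Matrix.of_apply, Fin.val_succ]
    split_ifs <;> first | rfl | omega | (exfalso; omega)
  -- last minor is lower triangular
  have hmL : ((Bmat (m+1) x).submatrix (Fin.last m).succAbove Fin.succ).det = (1 - x) ^ m := by
    rw [Matrix.det_of_lowerTriangular]
    · have : ∀ i : Fin m, (Bmat (m + 1) x).submatrix (Fin.last m).succAbove Fin.succ i i
          = 1 - x := by
        intro i
        simp only [Matrix.submatrix_apply, Fin.succAbove_last, Bmat, Matrix.of_apply,
          Fin.val_succ, Fin.coe_castSucc]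
        rw [if_neg (by omega), if_neg (by omega)]; simp
      rw [Finset.prod_congr rfl (fun i _ => this i), Finset.prod_const, Finset.card_univ,
        Fintype.card_fin]
    · intro i j hij
      simp only [OrderDual.toDual_lt_toDual] at hij
      simp only [Matrix.submatrix_apply, Fin.succAbove_last, Bmat, Matrix.of_apply,
        Fin.val_succ, Fin.coe_castSucc]
      have hij' : (i:ℕ) < (j:ℕ) := hij
      rw [if_neg (by omega), if_neg (by omega), if_neg (by omega)]
  have hB00 : Bmat (m+1) x 0 0 = x + 1 := by
    simp only [Bmat, Matrix.of_apply, Fin.val_zero]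
    split_ifs <;> first | rfl | omega | (exfalso; omega)
  have hBL0 : Bmat (m+1) x (Fin.last m) 0 = -1 := by
    simp only [Bmat, Matrix.of_apply]
    have hv0 : ((0 : Fin (m+1)) : ℕ) = 0 := rfl
    have hvl : ((Fin.last m : Fin (m+1)) : ℕ) = m := rfl
    split_ifs <;> first | rfl | omega | (exfalso; omega)
  rw [hm0, hmL, hB00, hBL0]
  have hpow : (-1:R) ^ (Fin.last m : ℕ) * -1 * (1 - x) ^ m = -(x-1)^m := by
    rw [Fin.val_last]
    have h : ((-1:R))^m * (1-x)^m = (x-1)^m := by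
      rw [← mul_pow]; congr 1; ring
    linear_combination (-1 : R) * h
  rw [Fin.val_zero, pow_zero, one_mul]
  rw [hpow]
  ring

lemma detB (m : ℕ) (hm : 1 ≤ m) (x : R) :
    2 * (Bmat m x).det = (x - 1) ^ m + (x + 1) ^ m := by
  induction m with
  | zero => omega
  | succ n ih =>
    rcases Nat.lt_or_ge n 1 with hn | hn
    · interval_cases n
      rw [detB_one]; ring
    · rw [detB_succ n hn x]
      have := ih hn
      linear_combination (x + 1) * this

lemma detM (m : ℕ) (hm : 1 ≤ m) (x : R) :
    2 * (Mmat m x).det = (x - 1) ^ m + (x + 1) ^ m := by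
  have h : (Mmat m x).det = (Bmat m x).det := by
    rw [← EM m x, Matrix.det_mul, detE, one_mul]
  rw [h]
  exact detB m hm x

end Stmt12Aux

open Stmt12Aux

/-- The spectrum of `A_m` is given by `((λ+1)/(λ-1))^m = -1`; equivalently
`det(λI − A_mᵀ)` is a nonzero constant multiple of `(λ−1)^m + (λ+1)^m`.
In particular `1` is not an eigenvalue of `A_m`. -/
theorem stmt12 (m : ℕ) (hm : 1 ≤ m) (A : Matrix (Fin m) (Fin m) ℚ)
    (hA : ∀ i j : Fin m, A i j = if i < j then -1 else if j < i then 1 else 0) :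
    (∀ lam : ℂ, ((lam + 1) / (lam - 1)) ^ m = -1 ↔
        Matrix.det (lam • (1 : Matrix (Fin m) (Fin m) ℂ) - A.map ((↑) : ℚ → ℂ)) = 0) ∧
    (∃ c : ℚ, c ≠ 0 ∧ ∀ lam : ℚ,
        Matrix.det (lam • (1 : Matrix (Fin m) (Fin m) ℚ) - Aᵀ)
          = c * ((lam - 1) ^ m + (lam + 1) ^ m)) ∧
    Matrix.det (A - 1) ≠ 0 := by
  have hMQ : ∀ lam : ℚ, lam • (1 : Matrix (Fin m) (Fin m) ℚ) - A = Mmat m lam := by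
    intro lam
    ext i j
    simp only [Matrix.sub_apply, Matrix.smul_apply, Matrix.one_apply, hA, Mmat, Matrix.of_apply,
      smul_eq_mul, Fin.lt_def, ← Fin.val_inj]
    split_ifs <;> first | ring1 | omega | (exfalso; omega)
  have hMC : ∀ lam : ℂ, lam • (1 : Matrix (Fin m) (Fin m) ℂ) - A.map ((↑) : ℚ → ℂ)
      = Mmat m lam := by
    intro lam
    ext i j
    simp only [Matrix.sub_apply, Matrix.smul_apply, Matrix.one_apply, Matrix.map_apply, hA,
      Mmat, Matrix.of_apply, smul_eq_mul, Fin.lt_def, ← Fin.val_inj, apply_ite ((↑) : ℚ → ℂ)]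
    push_cast
    split_ifs <;> first | ring1 | omega | (exfalso; omega)
  refine ⟨?_, ?_, ?_⟩
  · intro lam
    rw [hMC lam]
    have hdet : 2 * (Mmat m lam : Matrix (Fin m) (Fin m) ℂ).det
        = (lam - 1) ^ m + (lam + 1) ^ m := detM m hm lam
    have hiff : (Mmat m lam : Matrix (Fin m) (Fin m) ℂ).det = 0 ↔
        (lam - 1) ^ m + (lam + 1) ^ m = 0 := by
      constructor
      · intro h; rw [← hdet, h, mul_zero]
      · intro h
        rw [h, mul_eq_zero] at hdet
        rcases hdet with h2 | h2
        · exact absurd h2 two_ne_zero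
        · exact h2
    rw [hiff]
    by_cases hl : lam = 1
    · subst hl
      have h20 : ((1:ℂ) + 1) / ((1:ℂ) - 1) = 0 := by norm_num
      rw [h20, zero_pow (by omega : m ≠ 0), sub_self, zero_pow (by omega : m ≠ 0), zero_add]
      constructor
      · intro h; exact absurd h (by norm_num)
      · intro h
        rw [show ((1:ℂ) + 1) = 2 by norm_num] at h
        exact (pow_ne_zero m two_ne_zero h).elim
    · have h1 : lam - 1 ≠ 0 := sub_ne_zero.mpr hl
      rw [div_pow, div_eq_iff (pow_ne_zero m h1)]
      constructor
      · intro h; linear_combination h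
      · intro h; linear_combination h
  · refine ⟨1/2, by norm_num, fun lam => ?_⟩
    have h : lam • (1 : Matrix (Fin m) (Fin m) ℚ) - Aᵀ
        = (lam • (1 : Matrix (Fin m) (Fin m) ℚ) - A)ᵀ := by
      rw [Matrix.transpose_sub, Matrix.transpose_smul, Matrix.transpose_one]
    rw [h, Matrix.det_transpose, hMQ lam]
    have hdet : 2 * (Mmat m lam : Matrix (Fin m) (Fin m) ℚ).det
        = (lam - 1) ^ m + (lam + 1) ^ m := detM m hm lam
    linarith
  · have h : A - 1 = -((1:ℚ) • (1 : Matrix (Fin m) (Fin m) ℚ) - A) := by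
      rw [one_smul, neg_sub]
    rw [h, Matrix.det_neg, Fintype.card_fin, hMQ 1]
    have hdet : 2 * (Mmat m (1:ℚ)).det = ((1:ℚ) - 1) ^ m + ((1:ℚ) + 1) ^ m := detM m hm 1
    have h2 : ((1:ℚ) - 1) ^ m = 0 := by
      rw [sub_self, zero_pow (by omega : m ≠ 0)]
    have hMne : (Mmat m (1:ℚ)).det ≠ 0 := by
      intro h0
      rw [h0, mul_zero, h2, zero_add] at hdet
      have : ((1:ℚ) + 1) ^ m > 0 := by positivity
      linarith
    intro h0
    rw [mul_eq_zero] at h0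
    rcases h0 with h0 | h0
    · exact pow_ne_zero m (by norm_num : (-1:ℚ) ≠ 0) h0
    · exact hMne h0
end

section
/- With $A_m$ the $m\times m$ matrix having entries $-1$ above the diagonal, $0$ on it, and $1$ below it, the matrix $W=(A_m+I_m)(A_m-I_m)^{-1}$ equals $-e_{m1}+\sum_{i=2}^m e_{i-1,i}$, i.e., $W$ is the signed cyclic shift matrix with $W_{i,i+1}=1$ for $i=1,\dots,m-1$, $W_{m,1}=-1$, and all other entries $0$. Consequently $W^m=-I_m$. -/
/-! Row `i` of the signed shift `W` is `e_{i+1}`, except the last row, which is `-e_1`; so `W * M`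
moves the rows of `M` up by one and brings the first row, negated, to the bottom. Checking
entrywise that `W (A - 1) = A + 1` gives `(W - 1)(A - 1) = 2`, so `A - 1` is invertible and `W`
is the Cayley transform `(A + 1)(A - 1)⁻¹`. Iterating the shift, `W ^ k` (for `k ≤ m`) has
entries `1` at `(i, i + k)` and `-1` at `(i, i + k - m)`, whence `W ^ m = -1`. -/

namespace Matrix

variable {R : Type*} [Ring R] (m : ℕ)

def signedShift : Matrix (Fin m) (Fin m) R :=
  of fun i j => if (i : ℕ) + 1 = j then 1 else if (i : ℕ) = m - 1 ∧ (j : ℕ) = 0 then -1 else 0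

def signMatrix : Matrix (Fin m) (Fin m) R :=
  of fun i j => if i < j then -1 else if j < i then 1 else 0

variable {m}

theorem signedShift_row (i : Fin m) :
    signedShift m i = if h : (i : ℕ) + 1 < m then Pi.single ⟨i + 1, h⟩ (1 : R)
      else Pi.single ⟨0, i.pos⟩ (-1) := by
  ext j
  have := i.isLt
  have := j.isLt
  split_ifs with h <;> simp only [signedShift, of_apply, Pi.single_apply, Fin.ext_iff] <;>
    split_ifs <;> first | rfl | omega

theorem signedShift_mul_apply (M : Matrix (Fin m) (Fin m) R) (i j : Fin m) :
    (signedShift m * M : Matrix (Fin m) (Fin m) R) i j =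
      if h : (i : ℕ) + 1 < m then M ⟨i + 1, h⟩ j else -M ⟨0, i.pos⟩ j := by
  rw [mul_apply_eq_vecMul, signedShift_row]
  split_ifs <;> simp

theorem signedShift_mul_signMatrix_sub_one :
    signedShift m * (signMatrix m - 1) = (signMatrix m + 1 : Matrix (Fin m) (Fin m) R) := by
  ext i j
  rw [signedShift_mul_apply]
  have := i.isLt
  split_ifs with h <;>
    simp only [signMatrix, of_apply, sub_apply, add_apply, one_apply, Fin.lt_def, Fin.ext_iff] <;>
    split_ifs <;> first | (exfalso; omega) | norm_num

theorem signedShift_pow_apply {k : ℕ} (hk : k ≤ m) (i j : Fin m) :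
    (signedShift m ^ k : Matrix (Fin m) (Fin m) R) i j =
      if (i : ℕ) + k = j then 1 else if (i : ℕ) + k = j + m then -1 else 0 := by
  induction k generalizing i with
  | zero =>
    have := i.isLt
    have := j.isLt
    simp only [pow_zero, one_apply, Fin.ext_iff, add_zero]
    split_ifs <;> first | rfl | omega
  | succ k ih =>
    rw [pow_succ', signedShift_mul_apply]
    have := i.isLt
    have := j.isLt
    split_ifs with h <;> simp only [ih (by omega)] <;> split_ifs <;> first | omega | simp

theorem signedShift_pow_self : (signedShift m ^ m : Matrix (Fin m) (Fin m) R) = -1 := by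
  ext i j
  have := i.isLt
  rw [signedShift_pow_apply le_rfl]
  simp only [neg_apply, one_apply, Fin.ext_iff]
  split_ifs <;> first | omega | simp

theorem add_one_mul_inv_sub_one_eq_of_mul_sub_one {n K : Type*} [Fintype n] [DecidableEq n]
    [Field K] (h2 : (2 : K) ≠ 0) {A W : Matrix n n K} (h : W * (A - 1) = A + 1) :
    (A + 1) * (A - 1)⁻¹ = W := by
  have hleft : ((2 : K)⁻¹ • (W - 1)) * (A - 1) = 1 := by
    rw [smul_mul, sub_mul, h, one_mul, add_sub_sub_cancel, ← two_smul K, smul_smul,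
      inv_mul_cancel₀ h2, one_smul]
  rw [← h, mul_assoc, mul_nonsing_inv _ (isUnit_det_of_left_inverse hleft), mul_one]

end Matrix

theorem stmt13_general (m : ℕ) (A W : Matrix (Fin m) (Fin m) ℚ)
    (hA : ∀ i j : Fin m, A i j = if i < j then -1 else if j < i then 1 else 0)
    (hW : ∀ i j : Fin m, W i j = if (i : ℕ) + 1 = (j : ℕ) then 1
      else if (i : ℕ) = m - 1 ∧ (j : ℕ) = 0 then -1 else 0) :
    (A + 1) * (A - 1)⁻¹ = W ∧ W ^ m = -1 := by
  obtain rfl : A = Matrix.signMatrix m := Matrix.ext hA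
  obtain rfl : W = Matrix.signedShift m := Matrix.ext hW
  exact ⟨Matrix.add_one_mul_inv_sub_one_eq_of_mul_sub_one two_ne_zero
      Matrix.signedShift_mul_signMatrix_sub_one, Matrix.signedShift_pow_self⟩

/-- `W = (A_m + 1)(A_m − 1)⁻¹` is the signed cyclic shift matrix, and `W^m = −1`. -/
theorem stmt13 (m : ℕ) (hm : 1 ≤ m) (A W : Matrix (Fin m) (Fin m) ℚ)
    (hA : ∀ i j : Fin m, A i j = if i < j then -1 else if j < i then 1 else 0)
    (hW : ∀ i j : Fin m, W i j = if (i : ℕ) + 1 = (j : ℕ) then 1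
      else if (i : ℕ) = m - 1 ∧ (j : ℕ) = 0 then -1 else 0) :
    (A + 1) * (A - 1)⁻¹ = W ∧ W ^ m = -1 :=
  stmt13_general m A W hA hW
end

section
/- The corank of the $km\times km$ matrix $\Omega_{km}=A_m\otimes I_k - I_m\otimes A_k$ (Kronecker-type block matrix with diagonal blocks $A_m$ and off-diagonal blocks $\pm I_m$) equals $\#\{\nu\in\mathbb{C}:\nu^k=\nu^{m}=-1\}$. Equivalently, setting $l=\gcd(k,m)$, the corank is $l$ if $k/l$ and $m/l$ are both odd, and $0$ otherwise. -/
open Matrix Polynomial Kronecker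

namespace Stmt15Aux

theorem rank_map_field {K L : Type*} [Field K] [Field L] {n : Type*} [Fintype n] [DecidableEq n]
    (f : K →+* L) (M : Matrix n n K) : (M.map f).rank = M.rank := by
  classical
  obtain ⟨Lt, Lt', D, h⟩ := Matrix.Pivot.exists_list_transvec_mul_diagonal_mul_list_transvec M
  set P := (Lt.map Matrix.TransvectionStruct.toMatrix).prod with hP
  set Q := (Lt'.map Matrix.TransvectionStruct.toMatrix).prod with hQ
  have hdP : P.det = 1 := Matrix.TransvectionStruct.det_toMatrix_prod Lt
  have hdQ : Q.det = 1 := Matrix.TransvectionStruct.det_toMatrix_prod Lt'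
  have hmap : ∀ (A B : Matrix n n K), (A * B).map f = A.map f * B.map f := fun A B =>
    Matrix.map_mul (f := f)
  have hdPf : (P.map f).det = 1 := by
    rw [show P.map f = f.mapMatrix P from rfl, ← RingHom.map_det, hdP]; exact map_one f
  have hdQf : (Q.map f).det = 1 := by
    rw [show Q.map f = f.mapMatrix Q from rfl, ← RingHom.map_det, hdQ]; exact map_one f
  have hdiag : (Matrix.diagonal D).map f = Matrix.diagonal (f ∘ D) :=
    Matrix.diagonal_map (map_zero f)
  have hrk : M.rank = (Matrix.diagonal D).rank := by
    rw [h, Matrix.rank_mul_eq_left_of_isUnit_det Q (P * Matrix.diagonal D) (by rw [hdQ]; simp),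
      Matrix.rank_mul_eq_right_of_isUnit_det P (Matrix.diagonal D) (by rw [hdP]; simp)]
  have hrkf : (M.map f).rank = (Matrix.diagonal (f ∘ D)).rank := by
    rw [h, hmap, hmap, hdiag]
    rw [Matrix.rank_mul_eq_left_of_isUnit_det (Q.map f) _ (by rw [hdQf]; simp),
      Matrix.rank_mul_eq_right_of_isUnit_det (P.map f) _ (by rw [hdPf]; simp)]
  rw [hrk, hrkf, Matrix.rank_diagonal, Matrix.rank_diagonal]
  exact Fintype.card_congr <| Equiv.subtypeEquivRight fun i => by
    simp only [Function.comp_apply, ne_eq]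
    exact not_congr ⟨fun hh => f.injective (by rw [hh, map_zero]),
      fun hh => by rw [hh, map_zero]⟩


noncomputable section

/-- existence of an r-th root of -1 -/
lemma exists_root_neg_one (r : ℕ) (hr : 0 < r) : ∃ α : ℂ, α ^ r = -1 := by
  refine ⟨Complex.exp (Real.pi * Complex.I / r), ?_⟩
  rw [← Complex.exp_nat_mul]
  rw [show (r : ℂ) * (Real.pi * Complex.I / r) = Real.pi * Complex.I by
    rw [mul_div_assoc']
    exact mul_div_cancel_left₀ _ (Nat.cast_ne_zero.2 hr.ne')]
  exact Complex.exp_pi_mul_I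

lemma roots_spec (r : ℕ) (hr : 0 < r) : ∃ ζ : Fin r → ℂ, Function.Injective ζ ∧
    (∀ s, ζ s ^ r = -1) ∧ ∀ ν : ℂ, ν ^ r = -1 → ∃ s, ζ s = ν := by
  have hprim := Complex.isPrimitiveRoot_exp r hr.ne'
  have hcard : Multiset.card (nthRoots r (-1 : ℂ)) = r := by
    rw [hprim.card_nthRoots, if_pos (exists_root_neg_one r hr)]
  have hnd : (nthRoots r (-1 : ℂ)).Nodup := hprim.nthRoots_nodup (neg_ne_zero.2 one_ne_zero)
  set T : Finset ℂ := ⟨nthRoots r (-1 : ℂ), hnd⟩ with hT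
  have hTcard : T.card = r := hcard
  have hmem : ∀ ν : ℂ, ν ∈ T ↔ ν ^ r = -1 := fun ν => by
    simpa [hT, Finset.mem_mk] using mem_nthRoots hr
  obtain e := (Finset.equivFinOfCardEq hTcard).symm
  refine ⟨fun s => (e s : ℂ), ?_, ?_, ?_⟩
  · intro s t h
    exact e.injective (Subtype.ext h)
  · intro s; exact (hmem _).1 (e s).2
  · intro ν hν
    exact ⟨e.symm ⟨ν, (hmem ν).2 hν⟩, by simp⟩

lemma ncard_roots (r : ℕ) (hr : 0 < r) : {ν : ℂ | ν ^ r = -1}.ncard = r := by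
  obtain ⟨ζ, hinj, hpow, hsurj⟩ := roots_spec r hr
  have : {ν : ℂ | ν ^ r = -1} = Set.range ζ := by
    ext ν
    constructor
    · intro hν; obtain ⟨s, hs⟩ := hsurj ν hν; exact ⟨s, hs⟩
    · rintro ⟨s, rfl⟩; exact hpow s
  rw [this, ← Nat.card_coe_set_eq, Nat.card_range_of_injective hinj, Nat.card_eq_fintype_card,
    Fintype.card_fin]

/-- the eigenvalue function -/
def lam (ν : ℂ) : ℂ := (1 + ν) / (ν - 1)

lemma root_ne_one {r : ℕ} {ν : ℂ} (hν : ν ^ r = -1) : ν ≠ 1 := by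
  rintro rfl
  simp at hν
  norm_num at hν

lemma lam_inj {r q : ℕ} {ν μ : ℂ} (hν : ν ^ r = -1) (hμ : μ ^ q = -1)
    (h : lam ν = lam μ) : ν = μ := by
  have h1 : ν - 1 ≠ 0 := sub_ne_zero.2 (root_ne_one hν)
  have h2 : μ - 1 ≠ 0 := sub_ne_zero.2 (root_ne_one hμ)
  unfold lam at h
  rw [div_eq_div_iff h1 h2] at h
  linear_combination -h/2

/-- A_r matrix -/
def Ar (r : ℕ) : Matrix (Fin r) (Fin r) ℂ :=
  Matrix.of fun a b => if a < b then -1 else if b < a then 1 else 0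

/-- Vandermonde-style eigenvector matrix -/
def Vr (r : ℕ) (ζ : Fin r → ℂ) : Matrix (Fin r) (Fin r) ℂ :=
  Matrix.of fun i s => ζ s ^ (i : ℕ)

lemma eigen_sum (r : ℕ) {ν : ℂ} (hν : ν ^ r = -1) (a : Fin r) :
    ∑ b : Fin r, (if a < b then (-1:ℂ) else if b < a then 1 else 0) * ν ^ (b : ℕ)
      = lam ν * ν ^ (a : ℕ) := by
  have hν1 : ν ≠ 1 := root_ne_one hν
  have hd : ν - 1 ≠ 0 := sub_ne_zero.2 hν1
  have step : ∀ b : Fin r, (if a < b then (-1:ℂ) else if b < a then 1 else 0) * ν ^ (b : ℕ)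
      = (if (b:ℕ) < (a:ℕ) then ν ^ (b:ℕ) else 0) - (if (a:ℕ) < (b:ℕ) then ν ^ (b:ℕ) else 0) := by
    intro b
    rcases lt_trichotomy a b with h | h | h
    · simp [h, Fin.lt_iff_val_lt_val.1 h, not_lt.2 (le_of_lt (Fin.lt_iff_val_lt_val.1 h))]
    · subst h; simp
    · simp [h, not_lt.2 (le_of_lt h), Fin.lt_iff_val_lt_val.1 h,
        not_lt.2 (le_of_lt (Fin.lt_iff_val_lt_val.1 h))]
  rw [Finset.sum_congr rfl (fun b _ => step b), Finset.sum_sub_distrib]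
  have e1 : ∑ b : Fin r, (if (b:ℕ) < (a:ℕ) then ν ^ (b:ℕ) else 0)
      = ∑ i ∈ Finset.range (a:ℕ), ν ^ i := by
    have ha : (a:ℕ) < r := a.2
    rw [Fin.sum_univ_eq_sum_range (fun i => if i < (a:ℕ) then ν ^ i else 0) r,
      ← Finset.sum_filter]
    congr 1
    ext i
    simp only [Finset.mem_filter, Finset.mem_range]
    omega
  have e2 : ∑ b : Fin r, (if (a:ℕ) < (b:ℕ) then ν ^ (b:ℕ) else 0)
      = ∑ i ∈ Finset.Ico ((a:ℕ)+1) r, ν ^ i := by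
    have ha : (a:ℕ) < r := a.2
    rw [Fin.sum_univ_eq_sum_range (fun i => if (a:ℕ) < i then ν ^ i else 0) r,
      ← Finset.sum_filter]
    congr 1
    ext i
    simp only [Finset.mem_filter, Finset.mem_range, Finset.mem_Ico]
    omega
  rw [e1, e2, Finset.sum_Ico_eq_sub _ (Nat.succ_le_of_lt a.2)]
  rw [geom_sum_eq hν1, geom_sum_eq hν1, geom_sum_eq hν1, hν, lam]
  field_simp
  simp only [Nat.succ_eq_add_one]
  ring

lemma Ar_mul_Vr (r : ℕ) (ζ : Fin r → ℂ) (hpow : ∀ s, ζ s ^ r = -1) :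
    Ar r * Vr r ζ = Vr r ζ * Matrix.diagonal (fun s => lam (ζ s)) := by
  ext a t
  rw [Matrix.mul_diagonal]
  rw [Matrix.mul_apply]
  simpa [Ar, Vr, mul_comm] using eigen_sum r (hpow t) a


lemma sq_eq_one_cases {x : ℂ} (h : x ^ 2 = 1) : x = 1 ∨ x = -1 := by
  have : (x - 1) * (x + 1) = 0 := by linear_combination h
  rcases mul_eq_zero.1 this with h' | h'
  · left; linear_combination h'
  · right; linear_combination h'

lemma key1 {k m : ℕ} (hk : 0 < k) (hm : 0 < m) {ν : ℂ} (h1 : ν ^ k = -1) (h2 : ν ^ m = -1) :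
    ν ^ Nat.gcd k m = -1 ∧ Odd (k / Nat.gcd k m) ∧ Odd (m / Nat.gcd k m) := by
  set l := Nat.gcd k m with hl
  have hlpos : 0 < l := Nat.gcd_pos_of_pos_left m hk
  have e1 : ν ^ (2 * k) = 1 := by rw [mul_comm, pow_mul, h1]; norm_num
  have e2 : ν ^ (2 * m) = 1 := by rw [mul_comm, pow_mul, h2]; norm_num
  have eg : ν ^ (2 * l) = 1 := by
    have := pow_gcd_eq_one.2 ⟨e1, e2⟩
    rwa [Nat.gcd_mul_left] at this
  have hsq : (ν ^ l) ^ 2 = 1 := by rw [← pow_mul, mul_comm]; exact eg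
  have hkl : l * (k / l) = k := Nat.mul_div_cancel' (Nat.gcd_dvd_left k m)
  have hml : l * (m / l) = m := Nat.mul_div_cancel' (Nat.gcd_dvd_right k m)
  rcases sq_eq_one_cases hsq with hone | hneg
  · exfalso
    have : ν ^ k = 1 := by rw [← hkl, pow_mul, hone, one_pow]
    rw [h1] at this; norm_num at this
  · refine ⟨hneg, ?_, ?_⟩
    · by_contra hcon
      rw [Nat.not_odd_iff_even] at hcon
      have : ν ^ k = 1 := by rw [← hkl, pow_mul, hneg, hcon.neg_one_pow]
      rw [h1] at this; norm_num at this
    · by_contra hcon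
      rw [Nat.not_odd_iff_even] at hcon
      have : ν ^ m = 1 := by rw [← hml, pow_mul, hneg, hcon.neg_one_pow]
      rw [h2] at this; norm_num at this


lemma S_eq (k m : ℕ) (hk : 0 < k) (hm : 0 < m) :
    {ν : ℂ | ν ^ k = -1 ∧ ν ^ m = -1}.ncard
      = (if Odd (k / Nat.gcd k m) ∧ Odd (m / Nat.gcd k m) then Nat.gcd k m else 0) := by
  set l := Nat.gcd k m with hl
  have hlpos : 0 < l := Nat.gcd_pos_of_pos_left m hk
  have hkl : l * (k / l) = k := Nat.mul_div_cancel' (Nat.gcd_dvd_left k m)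
  have hml : l * (m / l) = m := Nat.mul_div_cancel' (Nat.gcd_dvd_right k m)
  split_ifs with h
  · have hset : {ν : ℂ | ν ^ k = -1 ∧ ν ^ m = -1} = {ν : ℂ | ν ^ l = -1} := by
      ext ν
      simp only [Set.mem_setOf_eq]
      constructor
      · intro ⟨h1, h2⟩; exact (key1 hk hm h1 h2).1
      · intro hν
        constructor
        · rw [← hkl, pow_mul, hν, h.1.neg_one_pow]
        · rw [← hml, pow_mul, hν, h.2.neg_one_pow]
    rw [hset, ncard_roots l hlpos]
  · have hset : {ν : ℂ | ν ^ k = -1 ∧ ν ^ m = -1} = ∅ := by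
      ext ν
      simp only [Set.mem_setOf_eq, Set.mem_empty_iff_false, iff_false, not_and]
      intro h1 h2
      exact h ⟨(key1 hk hm h1 h2).2.1, (key1 hk hm h1 h2).2.2⟩
    rw [hset, Set.ncard_empty]


end

end Stmt15Aux

open Stmt15Aux in
/-- The corank of `Ω_{km} = A_m ⊗ 1_k − 1_m ⊗ A_k` equals `#{ν : ν^k = ν^m = −1}`,
i.e. `gcd(k,m)` when both `k/gcd` and `m/gcd` are odd, and `0` otherwise. -/
theorem stmt15 (k m : ℕ) (hk : 1 ≤ k) (hm : 1 ≤ m)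
    (Ω : Matrix (Fin k × Fin m) (Fin k × Fin m) ℚ)
    (hΩ : ∀ p q : Fin k × Fin m, Ω p q =
      if p.1 = q.1 then (if p.2 < q.2 then -1 else if q.2 < p.2 then 1 else 0)
      else if p.1 < q.1 then (if p.2 = q.2 then 1 else 0)
      else -(if p.2 = q.2 then 1 else 0)) :
    k * m - Ω.rank = {ν : ℂ | ν ^ k = -1 ∧ ν ^ m = -1}.ncard ∧
    k * m - Ω.rank
      = (if Odd (k / Nat.gcd k m) ∧ Odd (m / Nat.gcd k m) then Nat.gcd k m else 0) := by
  have h1 : k * m - Ω.rank = {ν : ℂ | ν ^ k = -1 ∧ ν ^ m = -1}.ncard := by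
    obtain ⟨ζk, hkinj, hkpow, hksurj⟩ := roots_spec k hk
    obtain ⟨ζm, hminj, hmpow, hmsurj⟩ := roots_spec m hm
    classical
    set Ωc : Matrix (Fin k × Fin m) (Fin k × Fin m) ℂ := Ω.map (Rat.cast : ℚ → ℂ) with hΩcdef
    have hrank : Ω.rank = Ωc.rank := by
      rw [hΩcdef, show ((Rat.cast : ℚ → ℂ) = ⇑(Rat.castHom ℂ)) from rfl,
        rank_map_field (Rat.castHom ℂ) Ω]
    -- decomposition
    have hΩc : Ωc = (1 : Matrix (Fin k) (Fin k) ℂ) ⊗ₖ Ar m - (Ar k) ⊗ₖ (1 : Matrix (Fin m) (Fin m) ℂ) := by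
      ext ⟨i, a⟩ ⟨j, b⟩
      simp only [hΩcdef, Matrix.map_apply, hΩ, Matrix.sub_apply, kroneckerMap_apply,
        Matrix.one_apply, Ar, Matrix.of_apply]
      rcases lt_trichotomy i j with h | h | h
      · simp only [h.ne, h, if_true, if_false, h.ne', not_lt.2 h.le]
        split_ifs <;> push_cast <;> ring
      · subst h
        simp only [if_true, lt_irrefl, if_false]
        split_ifs <;> push_cast <;> ring
      · simp only [h.ne', h, if_true, if_false, not_lt.2 h.le, h.ne]
        split_ifs <;> push_cast <;> ring
    -- eigen matrix
    set P : Matrix (Fin k × Fin m) (Fin k × Fin m) ℂ := (Vr k ζk) ⊗ₖ (Vr m ζm) with hPdef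
    have hVk : (Vr k ζk).det ≠ 0 := by
      have : Vr k ζk = (Matrix.vandermonde ζk)ᵀ := by
        ext i s; simp [Vr, Matrix.vandermonde, Matrix.transpose_apply]
      rw [this, Matrix.det_transpose, Matrix.det_vandermonde]
      refine Finset.prod_ne_zero_iff.2 fun i _ => Finset.prod_ne_zero_iff.2 fun j hj => ?_
      rw [Finset.mem_Ioi] at hj
      exact sub_ne_zero.2 fun hc => hj.ne' (hkinj hc)
    have hVm : (Vr m ζm).det ≠ 0 := by
      have : Vr m ζm = (Matrix.vandermonde ζm)ᵀ := by
        ext i s; simp [Vr, Matrix.vandermonde, Matrix.transpose_apply]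
      rw [this, Matrix.det_transpose, Matrix.det_vandermonde]
      refine Finset.prod_ne_zero_iff.2 fun i _ => Finset.prod_ne_zero_iff.2 fun j hj => ?_
      rw [Finset.mem_Ioi] at hj
      exact sub_ne_zero.2 fun hc => hj.ne' (hminj hc)
    have hPdet : IsUnit P.det := by
      rw [hPdef, Matrix.det_kronecker]
      exact (IsUnit.pow _ (Ne.isUnit hVk)).mul (IsUnit.pow _ (Ne.isUnit hVm))
    set Λ : Fin k × Fin m → ℂ := fun p => lam (ζm p.2) - lam (ζk p.1) with hΛdef
    have key : Ωc * P = P * Matrix.diagonal Λ := by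
      have hA : (Vr k ζk) ⊗ₖ (Vr m ζm * Matrix.diagonal fun s => lam (ζm s))
          = P * ((1 : Matrix (Fin k) (Fin k) ℂ) ⊗ₖ Matrix.diagonal fun s => lam (ζm s)) := by
        rw [hPdef, ← Matrix.mul_kronecker_mul, Matrix.mul_one]
      have hB : (Vr k ζk * Matrix.diagonal fun s => lam (ζk s)) ⊗ₖ (Vr m ζm)
          = P * ((Matrix.diagonal fun s => lam (ζk s)) ⊗ₖ (1 : Matrix (Fin m) (Fin m) ℂ)) := by
        rw [hPdef, ← Matrix.mul_kronecker_mul, Matrix.mul_one]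
      rw [hΩc, hPdef, Matrix.sub_mul, ← Matrix.mul_kronecker_mul, ← Matrix.mul_kronecker_mul,
        Matrix.one_mul, Matrix.one_mul, Ar_mul_Vr m ζm hmpow, Ar_mul_Vr k ζk hkpow, ← hPdef,
        hA, hB, ← Matrix.mul_sub]
      congr 1
      ext ⟨s, t⟩ ⟨s', t'⟩
      by_cases h1 : s = s' <;> by_cases h2 : t = t' <;>
        simp [Matrix.diagonal_apply, Matrix.one_apply, hΛdef, h1, h2, Prod.ext_iff,
          kroneckerMap_apply]
    have hrkdiag : Ωc.rank = (Matrix.diagonal Λ).rank := by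
      calc Ωc.rank = (Ωc * P).rank := (Matrix.rank_mul_eq_left_of_isUnit_det P Ωc hPdet).symm
      _ = (P * Matrix.diagonal Λ).rank := by rw [key]
      _ = (Matrix.diagonal Λ).rank := Matrix.rank_mul_eq_right_of_isUnit_det P _ hPdet
    have hrk : Ω.rank = Fintype.card {p : Fin k × Fin m // Λ p ≠ 0} := by
      rw [hrank, hrkdiag, Matrix.rank_diagonal]
    have hcompl : k * m - Ω.rank = Fintype.card {p : Fin k × Fin m // Λ p = 0} := by
      rw [hrk]
      have h1 : Fintype.card {p : Fin k × Fin m // Λ p = 0}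
          = Fintype.card (Fin k × Fin m) - Fintype.card {p : Fin k × Fin m // Λ p ≠ 0} := by
        rw [← Fintype.card_subtype_compl]
        exact Fintype.card_congr (Equiv.subtypeEquivRight fun x => not_not.symm)
      rw [h1, Fintype.card_prod, Fintype.card_fin, Fintype.card_fin]
    rw [hcompl]
    -- identify zero set with coincidences
    have hΛzero : ∀ p : Fin k × Fin m, Λ p = 0 ↔ ζk p.1 = ζm p.2 := by
      intro p
      constructor
      · intro hp
        exact (lam_inj (hkpow p.1) (hmpow p.2) (sub_eq_zero.1 hp).symm)
      · intro hp
        simp [hΛdef, hp]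
    -- bijection with the root set
    have hbij : Fintype.card {p : Fin k × Fin m // Λ p = 0}
        = {ν : ℂ | ν ^ k = -1 ∧ ν ^ m = -1}.ncard := by
      rw [← Nat.card_coe_set_eq, ← Nat.card_eq_fintype_card]
      refine Nat.card_congr (Equiv.ofBijective
        (fun p => (⟨ζk p.1.1, hkpow p.1.1, by rw [(hΛzero p.1).1 p.2]; exact hmpow p.1.2⟩ :
          {ν : ℂ | ν ^ k = -1 ∧ ν ^ m = -1})) ⟨?_, ?_⟩)
      · rintro ⟨⟨s, t⟩, hp⟩ ⟨⟨s', t'⟩, hp'⟩ h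
        have h0 : ζk s = ζk s' := congrArg Subtype.val h
        have h1 : s = s' := hkinj h0
        have h2 : t = t' := hminj (by
          rw [← (hΛzero (s, t)).1 hp, ← (hΛzero (s', t')).1 hp', h0])
        subst h1; subst h2; rfl
      · rintro ⟨ν, hν1, hν2⟩
        obtain ⟨s, hs⟩ := hksurj ν hν1
        obtain ⟨t, ht⟩ := hmsurj ν hν2
        exact ⟨⟨(s, t), (hΛzero (s, t)).2 (by rw [hs, ht])⟩, Subtype.ext hs⟩
    rw [hbij]

  exact ⟨h1, h1.trans (S_eq k m hk hm)⟩
end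

section
/- Let $\mathbb{F}_2^E$ be the vector space over $\mathbb{F}_2$ with basis indexed by pairs $(i,j)$, $i\in[1,k]$, $j\in[1,m]$ with $k,m\ge 2$, and let $\eta$ be the bilinear form with $\eta(e_{ij},e_{\alpha\beta})$ equal mod 2 to the adjacency of the grid-with-diagonals graph: $\eta(e_{ij},e_{\alpha\beta})=1$ iff $(\alpha,\beta)\in\{(i,j\pm1),(i\pm1,j),(i+1,j-1),(i-1,j+1)\}$. Let $C$ be the set of pairs with $i\le k-1$ and $j\ge 2$. Then the subspace $\mathbb{F}_2^C$ spanned by $\{e_{ij}:(i,j)\in C\}$ intersects the radical $\ker\eta$ trivially: any $h\in\mathbb{F}_2^C$ with $\eta(h,e_{ij})=0$ for all $(i,j)$ must be $0$. -/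
/-!
Order the grid lexicographically and show `h p = 0` by downward induction. On the last row `h`
vanishes by assumption. Otherwise the orthogonality relation at the point `q` just below
`p` involves, apart from `p`, only neighbours of `q` that come after `p` (the rest of `q`'s row,
the row below it, and the right neighbour of `p` reached along the antidiagonal), on which `h`
already vanishes; so it reads `h p = 0`.
-/

def gridAdj {k m : ℕ} (p q : Fin k × Fin m) : Prop :=
  (p.1 = q.1 ∧ ((p.2 : ℕ) + 1 = (q.2 : ℕ) ∨ (q.2 : ℕ) + 1 = (p.2 : ℕ))) ∨
    (p.2 = q.2 ∧ ((p.1 : ℕ) + 1 = (q.1 : ℕ) ∨ (q.1 : ℕ) + 1 = (p.1 : ℕ))) ∨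
    ((p.1 : ℕ) + 1 = (q.1 : ℕ) ∧ (q.2 : ℕ) + 1 = (p.2 : ℕ)) ∨
    ((q.1 : ℕ) + 1 = (p.1 : ℕ) ∧ (p.2 : ℕ) + 1 = (q.2 : ℕ))

instance {k m : ℕ} : DecidableRel (@gridAdj k m) := fun _ _ => by
  unfold gridAdj; infer_instance

theorem gridAdj_below_iff {k m : ℕ} {p q r : Fin k × Fin m}
    (hq₁ : (q.1 : ℕ) = p.1 + 1) (hq₂ : q.2 = p.2) :
    gridAdj r q ↔ r = p ∨ gridAdj r q ∧ toLex p < toLex r := by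
  obtain ⟨⟨p₁, _⟩, ⟨p₂, _⟩⟩ := p
  obtain ⟨⟨q₁, _⟩, ⟨q₂, _⟩⟩ := q
  obtain ⟨⟨r₁, _⟩, ⟨r₂, _⟩⟩ := r
  simp only [Fin.mk.injEq] at hq₁ hq₂
  simp only [gridAdj, Prod.Lex.toLex_lt_toLex, Prod.mk.injEq, Fin.mk.injEq, Fin.mk_lt_mk]
  omega

theorem sum_gridAdj_below_eq {M : Type*} [AddCommMonoid M] {k m : ℕ}
    (h : Fin k × Fin m → M) {p q : Fin k × Fin m}
    (hq₁ : (q.1 : ℕ) = p.1 + 1) (hq₂ : q.2 = p.2)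
    (hlater : ∀ r, toLex p < toLex r → h r = 0) :
    ∑ r, (if gridAdj r q then h r else 0) = h p := by
  have hpq : gridAdj p q := (gridAdj_below_iff hq₁ hq₂).2 (Or.inl rfl)
  rw [Fintype.sum_eq_single p fun r hrp => ?_, if_pos hpq]
  split_ifs with hrq
  · exact hlater r (((gridAdj_below_iff hq₁ hq₂).1 hrq).resolve_left hrp).2
  · rfl

theorem stmt17_general (k m : ℕ)
    (h : Fin k × Fin m → ZMod 2)
    (hsupp : ∀ p : Fin k × Fin m, ((p.1 : ℕ) = k - 1 ∨ (p.2 : ℕ) = 0) → h p = 0)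
    (horth : ∀ q : Fin k × Fin m,
      (∑ p : Fin k × Fin m,
        (if ((p.1 = q.1 ∧ ((p.2 : ℕ) + 1 = (q.2 : ℕ) ∨ (q.2 : ℕ) + 1 = (p.2 : ℕ))) ∨
             (p.2 = q.2 ∧ ((p.1 : ℕ) + 1 = (q.1 : ℕ) ∨ (q.1 : ℕ) + 1 = (p.1 : ℕ))) ∨
             ((p.1 : ℕ) + 1 = (q.1 : ℕ) ∧ (q.2 : ℕ) + 1 = (p.2 : ℕ)) ∨
             ((q.1 : ℕ) + 1 = (p.1 : ℕ) ∧ (p.2 : ℕ) + 1 = (q.2 : ℕ)))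
          then h p else 0)) = 0) :
    h = 0 := by
  funext p
  induction hp : toLex p using WellFoundedGT.induction generalizing p with
  | _ x ih =>
    subst hp
    rcases Nat.lt_or_ge ((p.1 : ℕ) + 1) k with hbelow | hlast
    · rw [← sum_gridAdj_below_eq h (q := (⟨p.1 + 1, hbelow⟩, p.2)) rfl rfl
        fun r hr => ih _ hr r rfl]
      exact horth _
    · exact hsupp p (Or.inl (by omega))

/-- For the grid-with-antidiagonals graph form on `𝔽₂^{k×m}`, the subspace spanned by
the vertices off the last row and first column meets the radical trivially. -/
theorem stmt17 (k m : ℕ) (hk : 2 ≤ k) (hm : 2 ≤ m)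
    (h : Fin k × Fin m → ZMod 2)
    (hsupp : ∀ p : Fin k × Fin m, ((p.1 : ℕ) = k - 1 ∨ (p.2 : ℕ) = 0) → h p = 0)
    (horth : ∀ q : Fin k × Fin m,
      (∑ p : Fin k × Fin m,
        (if ((p.1 = q.1 ∧ ((p.2 : ℕ) + 1 = (q.2 : ℕ) ∨ (q.2 : ℕ) + 1 = (p.2 : ℕ))) ∨
             (p.2 = q.2 ∧ ((p.1 : ℕ) + 1 = (q.1 : ℕ) ∨ (q.1 : ℕ) + 1 = (p.1 : ℕ))) ∨
             ((p.1 : ℕ) + 1 = (q.1 : ℕ) ∧ (q.2 : ℕ) + 1 = (p.2 : ℕ)) ∨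
             ((q.1 : ℕ) + 1 = (p.1 : ℕ) ∧ (p.2 : ℕ) + 1 = (q.2 : ℕ)))
          then h p else 0)) = 0) :
    h = 0 :=
  stmt17_general k m h hsupp horth
end
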